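/- For β > β_c, for every ε > 0 there exists N ∈ ℕ such that for all n, m > N and all L with 1 ≤ L ≤ min{n,m}, ∑_{l=0}^{L−1} |μ_{β,n}(B_{n−l}) − μ_{β,m}(B_{m−l})| < ε. In fact this sum is bounded above by (2(K_1+2)/G_1²) K_1 e^{−(βα−h)m} where K_1 = 1/(1−e^{−(βα−h)}) and G_1 = inf_{k∈ℕ}(K_1 − K_1 e^{−(βα−h)k} + 2e^{−βαk}) > 0 (assuming n > m). -/

import Mathlib

open MeasureTheory Set Real Filter

noncomputable def cantorStage : ℕ → Set ℝ
  | 0 => Set.Icc 0 1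
  | (m+1) => (fun x => x / 3) '' cantorStage m ∪ (fun x => (x + 2) / 3) '' cantorStage m

noncomputable def Bset (m : ℕ) : Set ℝ := cantorStage (m - 1) \ cantorStage m

noncomputable def psi (A : ℕ → ℝ) (n : ℕ) (x : ℝ) : ℝ :=
  -∑ k ∈ Finset.Icc 1 n, A k * (Bset k).indicator (fun _ => (1:ℝ)) x

noncomputable def hc : ℝ := Real.log (3/2)

noncomputable def psiα (α : ℝ) : ℕ → ℝ → ℝ := psi (fun k => α * k)

noncomputable def Zf (α β : ℝ) (n : ℕ) : ℝ :=
  ∫ x in Set.Icc (0:ℝ) 1, Real.exp (-β * psiα α n x)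

noncomputable def gibbs (α β : ℝ) (n : ℕ) (A : Set ℝ) : ℝ :=
  (∫ x in A ∩ Set.Icc (0:ℝ) 1, Real.exp (-β * psiα α n x)) / Zf α β n

/-!
On `B_k` the potential is the constant `-α k`, and `B_k` has Lebesgue measure `(2/3)^k / 2`.
Hence `μ_{β,n}(B_{n-l}) = q^l / F_n` with `q = e^{-b}` and `F_n = 2 e^{-bn} Z_{β,n} =
K_1 (1 - q^n) + 2 e^{-βαn}`, and `F_n ≥ 1` because `K_1 (1 - q) = 1`, so `G_1 ≥ 1`.
For `m ≤ n` one has `|F_m - F_n| ≤ (K_1 + 2) q^m` (using `e^{-βα} ≤ q`) and `F_n F_m ≥ G_1²`,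
so the `l`-th term is at most `q^l (K_1 + 2) q^m / G_1²`; summing the geometric series in `l`
bounds the sum by `K_1 (K_1 + 2) q^m / G_1²`, which tends to `0` as `m → ∞`.
-/

lemma cantorStage_subset_Icc (m : ℕ) : cantorStage m ⊆ Icc 0 1 := by
  induction m with
  | zero => exact subset_rfl
  | succ m ih =>
    rintro _ (⟨x, hx, rfl⟩ | ⟨x, hx, rfl⟩) <;>
    · obtain ⟨h0, h1⟩ := ih hx
      constructor <;> dsimp only <;> linarith

lemma cantorStage_succ_subset (m : ℕ) : cantorStage (m + 1) ⊆ cantorStage m := by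
  induction m with
  | zero => exact cantorStage_subset_Icc 1
  | succ m ih => exact union_subset_union (image_mono ih) (image_mono ih)

lemma cantorStage_antitone : Antitone cantorStage :=
  antitone_nat_of_succ_le cantorStage_succ_subset

lemma isCompact_cantorStage (m : ℕ) : IsCompact (cantorStage m) := by
  induction m with
  | zero => exact isCompact_Icc
  | succ m ih => exact (ih.image (by fun_prop)).union (ih.image (by fun_prop))

lemma measurableSet_cantorStage (m : ℕ) : MeasurableSet (cantorStage m) :=
  (isCompact_cantorStage m).isClosed.measurableSet

lemma volume_image_add_div_three (c : ℝ) (S : Set ℝ) :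
    volume ((fun x => (x + c) / 3) '' S) = ENNReal.ofReal 3⁻¹ * volume S := by
  have hS : (fun x => (x + c) / 3) '' S = (3 * ·) ⁻¹' ((· + c) '' S) := by
    ext y
    simp only [mem_image, mem_preimage]
    exact ⟨fun ⟨x, hx, hy⟩ => ⟨x, hx, by rw [← hy]; ring⟩,
      fun ⟨x, hx, hy⟩ => ⟨x, hx, by rw [hy]; ring⟩⟩
  rw [hS, Real.volume_preimage_mul_left (by norm_num), image_add_right,
    measure_preimage_add_right, abs_of_pos (by norm_num)]

lemma volume_cantorStage (m : ℕ) : volume (cantorStage m) = ENNReal.ofReal ((2 / 3) ^ m) := by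
  induction m with
  | zero => simp [cantorStage]
  | succ m ih =>
    have hdisj : Disjoint ((fun x => x / 3) '' cantorStage m)
        ((fun x => (x + 2) / 3) '' cantorStage m) := by
      refine disjoint_left.2 ?_
      rintro _ ⟨x, hx, rfl⟩ ⟨y, hy, hxy⟩
      have hx1 := (cantorStage_subset_Icc m hx).2
      have hy0 := (cantorStage_subset_Icc m hy).1
      dsimp only at hxy
      linarith
    have hmeas : MeasurableSet ((fun x => (x + 2) / 3) '' cantorStage m) :=
      ((isCompact_cantorStage m).image (by fun_prop)).isClosed.measurableSet
    have hleft := volume_image_add_div_three 0 (cantorStage m)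
    simp only [add_zero] at hleft
    change volume (_ ∪ _) = _
    rw [measure_union hdisj hmeas, hleft, volume_image_add_div_three, ih,
      ← ENNReal.ofReal_mul (by norm_num), ← ENNReal.ofReal_add (by positivity) (by positivity)]
    congr 1
    ring

lemma pairwise_disjoint_Bset : Pairwise fun j k => Disjoint (Bset j) (Bset k) := by
  intro j k hjk
  wlog hlt : j < k generalizing j k
  · exact (this hjk.symm (lt_of_le_of_ne (not_lt.1 hlt) hjk.symm)).symm
  exact disjoint_sdiff_left.mono_right
    (sdiff_subset.trans (cantorStage_antitone (by omega : j ≤ k - 1)))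

lemma Bset_subset_Icc (k : ℕ) : Bset k ⊆ Icc 0 1 :=
  sdiff_subset.trans (cantorStage_subset_Icc _)

lemma measurableSet_Bset (k : ℕ) : MeasurableSet (Bset k) :=
  (measurableSet_cantorStage _).diff (measurableSet_cantorStage _)

lemma volume_real_Bset {k : ℕ} (hk : 1 ≤ k) : volume.real (Bset k) = (2 / 3) ^ k / 2 := by
  obtain ⟨j, rfl⟩ := Nat.exists_eq_add_of_le' hk
  rw [Bset, Nat.add_sub_cancel, measureReal_sdiff (cantorStage_succ_subset j)
    (measurableSet_cantorStage _) (by simp [volume_cantorStage]), measureReal_def,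
    measureReal_def, volume_cantorStage, volume_cantorStage, ENNReal.toReal_ofReal (by positivity),
    ENNReal.toReal_ofReal (by positivity)]
  ring

lemma psi_of_mem_Bset (A : ℕ → ℝ) {n k : ℕ} (hk : k ∈ Finset.Icc 1 n) {x : ℝ}
    (hx : x ∈ Bset k) : psi A n x = -A k := by
  rw [psi, Finset.sum_eq_single_of_mem k hk, indicator_of_mem hx, mul_one]
  intro j _ hjk
  rw [indicator_of_notMem (disjoint_left.1 (pairwise_disjoint_Bset hjk.symm) hx), mul_zero]

lemma psi_of_notMem (A : ℕ → ℝ) {n : ℕ} {x : ℝ} (hx : ∀ k ∈ Finset.Icc 1 n, x ∉ Bset k) :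
    psi A n x = 0 := by
  rw [psi, Finset.sum_eq_zero fun k hk => by rw [indicator_of_notMem (hx k hk), mul_zero],
    neg_zero]

lemma exp_neg_mul_psi (A : ℕ → ℝ) (β : ℝ) (n : ℕ) (x : ℝ) :
    exp (-β * psi A n x) =
      1 + ∑ k ∈ Finset.Icc 1 n, (Bset k).indicator (fun _ => exp (β * A k) - 1) x := by
  by_cases h : ∃ k ∈ Finset.Icc 1 n, x ∈ Bset k
  · obtain ⟨k, hk, hx⟩ := h
    rw [psi_of_mem_Bset A hk hx, Finset.sum_eq_single_of_mem k hk, indicator_of_mem hx]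
    · ring_nf
    · intro j _ hjk
      exact indicator_of_notMem (disjoint_left.1 (pairwise_disjoint_Bset hjk.symm) hx) _
  · push Not at h
    rw [psi_of_notMem A h, Finset.sum_eq_zero fun k hk => indicator_of_notMem (h k hk) _]
    simp

lemma setIntegral_Icc_exp_neg_mul_psi (A : ℕ → ℝ) (β : ℝ) (n : ℕ) :
    ∫ x in Icc 0 1, exp (-β * psi A n x) =
      1 + ∑ k ∈ Finset.Icc 1 n, (exp (β * A k) - 1) * ((2 / 3) ^ k / 2) := by
  have hint (k : ℕ) : Integrable ((Bset k).indicator fun _ => exp (β * A k) - 1)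
      (volume.restrict (Icc (0 : ℝ) 1)) :=
    (integrable_const _).indicator (measurableSet_Bset k)
  simp_rw [exp_neg_mul_psi]
  rw [integral_add (integrable_const _) (integrable_finsetSum _ fun k _ => hint k),
    integral_finsetSum _ fun k _ => hint k]
  congr 1
  · simp
  refine Finset.sum_congr rfl fun k hk => ?_
  rw [integral_indicator_const _ (measurableSet_Bset k), measureReal_restrict_apply
    (measurableSet_Bset k), inter_eq_left.2 (Bset_subset_Icc k),
    volume_real_Bset (Finset.mem_Icc.1 hk).1, smul_eq_mul, mul_comm]

lemma setIntegral_Bset_exp_neg_mul_psi (A : ℕ → ℝ) (β : ℝ) {n k : ℕ}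
    (hk : k ∈ Finset.Icc 1 n) :
    ∫ x in Bset k ∩ Icc 0 1, exp (-β * psi A n x) = exp (β * A k) * ((2 / 3) ^ k / 2) := by
  rw [inter_eq_left.2 (Bset_subset_Icc k), setIntegral_congr_fun (measurableSet_Bset k)
    (g := fun _ => exp (β * A k)) fun x hx => by simp only [psi_of_mem_Bset A hk hx, mul_neg,
    neg_mul, neg_neg], setIntegral_const, volume_real_Bset (Finset.mem_Icc.1 hk).1,
    smul_eq_mul, mul_comm]

lemma hc_pos : 0 < hc := Real.log_pos (by norm_num)

-- `2 e^{-bn} Z_{β,n}`, written with `q = e^{-b}` and `r = e^{-βα}`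
-- (see `normalizedPartition_eq_pow_mul`).
noncomputable def normalizedPartition (q r : ℝ) (n : ℕ) : ℝ :=
  1 / (1 - q) - 1 / (1 - q) * q ^ n + 2 * r ^ n

lemma normalizedPartition_eq_pow_mul {q x : ℝ} (hq : q ≠ 1) (hxq : 2 / 3 * x * q = 1) (n : ℕ) :
    normalizedPartition q (2 / 3 * q) n =
      q ^ n * (2 * (1 + ∑ k ∈ Finset.Icc 1 n, (x ^ k - 1) * ((2 / 3) ^ k / 2))) := by
  have hK : 1 / (1 - q) * (1 - q) = 1 := one_div_mul_cancel (sub_ne_zero.2 hq.symm)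
  induction n with
  | zero => simp [normalizedPartition]
  | succ n ih =>
    have hxq_pow : (2 / 3 * x * q) ^ (n + 1) = 1 := by rw [hxq, one_pow]
    rw [Finset.sum_Icc_succ_top (by omega)]
    unfold normalizedPartition at ih ⊢
    linear_combination q * ih - hxq_pow + hK

lemma gibbs_Bset_sub {α β : ℝ} (hb : β * α ≠ hc) {n l : ℕ} (hl : l < n) :
    gibbs α β n (Bset (n - l)) = exp (-(β * α - hc)) ^ l /
      normalizedPartition (exp (-(β * α - hc))) (exp (-(β * α))) n := by
  obtain ⟨k, rfl⟩ := Nat.exists_eq_add_of_le hl.le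
  set x := exp (β * α)
  set q := exp (-(β * α - hc))
  have hq : q ≠ 1 := by rw [Ne, exp_eq_one_iff]; intro h; exact hb (by linarith)
  have hxq : 2 / 3 * x * q = 1 := by
    rw [mul_assoc, ← exp_add, show β * α + -(β * α - hc) = hc by ring, hc, exp_log (by norm_num)]
    norm_num
  have hr : exp (-(β * α)) = 2 / 3 * q := by
    rw [exp_neg]; exact inv_eq_of_mul_eq_one_right (by linear_combination hxq)
  have hpow (k : ℕ) : exp (β * (α * k)) = x ^ k := by rw [← exp_nat_mul]; ring_nf
  have hk : k ∈ Finset.Icc 1 (l + k) := by simp only [Finset.mem_Icc]; omega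
  rw [Nat.add_sub_cancel_left]
  simp only [gibbs, Zf, psiα, setIntegral_Bset_exp_neg_mul_psi _ _ hk,
    setIntegral_Icc_exp_neg_mul_psi, hpow, hr]
  rw [normalizedPartition_eq_pow_mul hq hxq]
  set Z := 1 + ∑ i ∈ Finset.Icc 1 (l + k), (x ^ i - 1) * ((2 / 3) ^ i / 2)
  have hxq_pow : (2 / 3 * x * q) ^ k = 1 := by rw [hxq, one_pow]
  -- `Z > 0` holds but is not needed: for `Z = 0` both sides are `0` by `x / 0 = 0`.
  rcases eq_or_ne Z 0 with hZ | hZ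
  · simp [hZ]
  have hq0 : q ≠ 0 := (exp_pos _).ne'
  field_simp
  linear_combination q ^ l * hxq_pow

section Estimates

variable {q r : ℝ}

lemma one_le_normalizedPartition (hq0 : 0 ≤ q) (hq1 : q < 1) (hr : 0 ≤ r) (k : ℕ) :
    1 ≤ normalizedPartition q r k := by
  rcases k with _ | k
  · simp [normalizedPartition]
  have hK : 1 / (1 - q) * (1 - q) = 1 := one_div_mul_cancel (by linarith)
  have hqk : 1 / (1 - q) * q ^ (k + 1) ≤ 1 / (1 - q) * q :=
    mul_le_mul_of_nonneg_left (pow_le_of_le_one hq0 hq1.le (by omega))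
      (one_div_nonneg.2 (by linarith))
  unfold normalizedPartition
  nlinarith [pow_nonneg hr (k + 1)]

lemma abs_normalizedPartition_sub_le (hq0 : 0 ≤ q) (hq1 : q < 1) (hr : 0 ≤ r) (hrq : r ≤ q)
    {m n : ℕ} (hmn : m ≤ n) :
    |normalizedPartition q r m - normalizedPartition q r n| ≤ (1 / (1 - q) + 2) * q ^ m := by
  have hK : 0 ≤ 1 / (1 - q) := one_div_nonneg.2 (by linarith)
  have hqn : 1 / (1 - q) * q ^ n ≤ 1 / (1 - q) * q ^ m :=
    mul_le_mul_of_nonneg_left (pow_le_pow_of_le_one hq0 hq1.le hmn) hK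
  have hrn : r ^ n ≤ r ^ m := pow_le_pow_of_le_one hr (hrq.trans hq1.le) hmn
  have hrm : r ^ m ≤ q ^ m := pow_le_pow_left₀ hr hrq m
  unfold normalizedPartition
  rw [abs_le]
  constructor <;> nlinarith [mul_nonneg hK (pow_nonneg hq0 n), pow_nonneg hr n]

lemma sum_abs_pow_div_normalizedPartition_sub_le (hq0 : 0 ≤ q) (hq1 : q < 1) (hr : 0 ≤ r)
    (hrq : r ≤ q) {m n : ℕ} (hmn : m ≤ n) (L : ℕ) :
    ∑ l ∈ Finset.range L,
        |q ^ l / normalizedPartition q r n - q ^ l / normalizedPartition q r m| ≤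
      1 / (1 - q) * ((1 / (1 - q) + 2) * q ^ m / (⨅ k, normalizedPartition q r k) ^ 2) := by
  set F := normalizedPartition q r
  set G := ⨅ k, F k
  have hF (k : ℕ) : 1 ≤ F k := one_le_normalizedPartition hq0 hq1 hr k
  have hG : 1 ≤ G := le_ciInf hF
  have hGF (k : ℕ) : G ≤ F k := ciInf_le ⟨1, forall_mem_range.2 hF⟩ k
  have hK : 0 ≤ 1 / (1 - q) := one_div_nonneg.2 (by linarith)
  have hterm (l : ℕ) :
      |q ^ l / F n - q ^ l / F m| ≤ q ^ l * ((1 / (1 - q) + 2) * q ^ m / G ^ 2) := by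
    have hFn : 0 < F n := by linarith [hF n]
    have hFm : 0 < F m := by linarith [hF m]
    have hdiff : q ^ l / F n - q ^ l / F m = q ^ l * ((F m - F n) / (F n * F m)) := by
      field_simp
    rw [hdiff, abs_mul, abs_div, abs_of_nonneg (pow_nonneg hq0 l), abs_of_pos (mul_pos hFn hFm)]
    gcongr ?_ * ?_
    refine div_le_div₀ (by positivity) (abs_normalizedPartition_sub_le hq0 hq1 hr hrq hmn)
      (by positivity) ?_
    rw [sq]
    exact mul_le_mul (hGF n) (hGF m) (by linarith) (hFn.le)
  calc ∑ l ∈ Finset.range L, |q ^ l / F n - q ^ l / F m|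
      ≤ ∑ l ∈ Finset.range L, q ^ l * ((1 / (1 - q) + 2) * q ^ m / G ^ 2) :=
        Finset.sum_le_sum fun l _ => hterm l
    _ = (∑ l ∈ Finset.Ico 0 L, q ^ l) * ((1 / (1 - q) + 2) * q ^ m / G ^ 2) := by
        rw [Finset.range_eq_Ico, Finset.sum_mul]
    _ ≤ 1 / (1 - q) * ((1 / (1 - q) + 2) * q ^ m / G ^ 2) := by
        gcongr
        simpa using geom_sum_Ico_le_of_lt_one hq0 hq1 (m := 0) (n := L)

end Estimates

lemma sum_abs_gibbs_sub_le {α β : ℝ} (hb : hc < β * α) {n m L : ℕ} (hmn : m ≤ n)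
    (hLm : L ≤ m) :
    ∑ l ∈ Finset.range L, |gibbs α β n (Bset (n - l)) - gibbs α β m (Bset (m - l))| ≤
      1 / (1 - exp (-(β * α - hc))) * ((1 / (1 - exp (-(β * α - hc))) + 2) *
        exp (-(β * α - hc)) ^ m /
          (⨅ k, normalizedPartition (exp (-(β * α - hc))) (exp (-(β * α))) k) ^ 2) := by
  rw [Finset.sum_congr rfl fun l hl => by
    rw [gibbs_Bset_sub hb.ne' ((Finset.mem_range.1 hl).trans_le (hLm.trans hmn)),
      gibbs_Bset_sub hb.ne' ((Finset.mem_range.1 hl).trans_le hLm)]]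
  exact sum_abs_pow_div_normalizedPartition_sub_le (exp_pos _).le
    (exp_lt_one_iff.2 (by linarith)) (exp_pos _).le (exp_le_exp.2 (by linarith [hc_pos])) hmn L

theorem stmt13 (α β : ℝ) (hα : 0 < α) (hβc : hc / α < β) :
    let b : ℝ := β*α - hc
    let K1 : ℝ := 1 / (1 - Real.exp (-b))
    let G1 : ℝ := ⨅ k : ℕ, (K1 - K1 * Real.exp (-b * k) + 2 * Real.exp (-(β*α) * k))
    (∀ ε > 0, ∃ N : ℕ, ∀ n m L : ℕ, N < n → N < m → 1 ≤ L → L ≤ min n m →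
      ∑ l ∈ Finset.range L,
        |gibbs α β n (Bset (n - l)) - gibbs α β m (Bset (m - l))| < ε) ∧
    (∀ n m L : ℕ, m < n → 1 ≤ L → L ≤ m →
      ∑ l ∈ Finset.range L,
        |gibbs α β n (Bset (n - l)) - gibbs α β m (Bset (m - l))| ≤
        (2 * (K1 + 2) / G1 ^ 2) * K1 * Real.exp (-b * m)) := by
  intro b K1 G1
  have hb : hc < β * α := by rw [div_lt_iff₀ hα] at hβc; linarith
  have hexp (c : ℝ) (k : ℕ) : exp (c * k) = exp c ^ k := by rw [mul_comm, exp_nat_mul]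
  have hG1 : G1 = ⨅ k, normalizedPartition (exp (-b)) (exp (-(β * α))) k := by
    simp only [G1, K1, hexp, normalizedPartition]
  have hbound (n m L : ℕ) (hmn : m ≤ n) (hLm : L ≤ m) :
      ∑ l ∈ Finset.range L, |gibbs α β n (Bset (n - l)) - gibbs α β m (Bset (m - l))| ≤
        2 * (K1 + 2) / G1 ^ 2 * K1 * exp (-b * m) := by
    have h := sum_abs_gibbs_sub_le hb hmn hLm
    have h0 := (Finset.sum_nonneg fun l _ => abs_nonneg _).trans h
    rw [hG1, hexp]
    refine h.trans ((le_mul_of_one_le_left h0 one_le_two).trans_eq ?_)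
    simp only [K1, b]
    ring
  refine ⟨fun ε hε => ?_, fun n m L hmn _ hLm => hbound n m L hmn.le hLm⟩
  have hlim : Tendsto (fun m : ℕ => 2 * (K1 + 2) / G1 ^ 2 * K1 * exp (-b * m)) atTop (nhds 0) := by
    simp only [hexp]
    simpa using (tendsto_pow_atTop_nhds_zero_of_lt_one (exp_pos (-b)).le
      (exp_lt_one_iff.2 (by simp only [b]; linarith))).const_mul (2 * (K1 + 2) / G1 ^ 2 * K1)
  obtain ⟨N, hN⟩ := eventually_atTop.1 (hlim.eventually (gt_mem_nhds hε))
  refine ⟨N, fun n m L hn hm _ hL => ?_⟩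
  rcases le_total m n with h | h
  · exact (hbound n m L h (hL.trans (min_le_right _ _))).trans_lt (hN m hm.le)
  · simp_rw [abs_sub_comm (gibbs α β n _)]
    exact (hbound m n L h (hL.trans (min_le_left _ _))).trans_lt (hN n hn.le)
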